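/- arXiv:2009.03391 — 4 statements merged into one kernel-verified Lean document; each statement's English description precedes it below -/
import Mathlib

section
/- If Y has a Poisson distribution with parameter λ ∈ (0,1], then E|Y - λ|^(5/2) ≤ √8 · λ. -/
/-!
Since `√t ≤ (1 + t) / 2`, we have `t ^ (5/2) ≤ t² (1 + t) / 2` for `t ≥ 0`; with `|n - λ| ≤ n + λ`
this gives `|n - λ| ^ (5/2) ≤ (n - λ)² (1 + λ + n) / 2 = ((1 + 2λ) (n - λ)² + (n - λ)³) / 2`.
The second and third central moments of `Po(λ)` both equal `λ`, as one reads off from the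
factorial moments `E[Y (Y - 1) ⋯ (Y - j + 1)] = λ ^ j`, so the bound has mean `λ + λ² ≤ 2λ ≤ √8 λ`.
-/

open scoped Nat
open NNReal MeasureTheory ProbabilityTheory Real

lemma hasSum_descFactorial_mul_pow_div_factorial (x : ℝ) (j : ℕ) :
    HasSum (fun n : ℕ => (n.descFactorial j : ℝ) * x ^ n / n !) (x ^ j * exp x) := by
  induction j with
  | zero => simpa [exp_eq_exp_ℝ] using NormedSpace.expSeries_div_hasSum_exp x
  | succ j ih =>
    have hshift : ∀ n : ℕ, ((n + 1).descFactorial (j + 1) : ℝ) * x ^ (n + 1) / (n + 1)! =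
        x * ((n.descFactorial j : ℝ) * x ^ n / n !) := by
      intro n
      rw [Nat.succ_descFactorial_succ, Nat.factorial_succ]
      push_cast
      field_simp
      ring
    rw [← hasSum_nat_add_iff' 1, funext hshift]
    simp only [Finset.range_one, Finset.sum_singleton, Nat.zero_descFactorial_succ,
      Nat.cast_zero, zero_mul, zero_div, sub_zero, pow_succ', mul_assoc]
    exact ih.mul_left x

lemma hasSum_poisson_descFactorial (r : ℝ≥0) (j : ℕ) :
    HasSum (fun n : ℕ => exp (-r) * r ^ n / n ! * n.descFactorial j) ((r : ℝ) ^ j) := by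
  have h := (hasSum_descFactorial_mul_pow_div_factorial r j).mul_left (exp (-r))
  rw [mul_left_comm, ← exp_add, neg_add_cancel, exp_zero, mul_one] at h
  have hweight (n : ℕ) : exp (-r) * r ^ n / n ! * n.descFactorial j =
      exp (-r) * (n.descFactorial j * r ^ n / n !) := by ring
  simpa only [hweight] using h

lemma hasSum_poisson_sub_sq (r : ℝ≥0) :
    HasSum (fun n : ℕ => exp (-r) * r ^ n / n ! * ((n : ℝ) - r) ^ 2) r := by
  have h := (hasSum_poisson_descFactorial r 2).add
    (((hasSum_poisson_descFactorial r 1).mul_right (1 - 2 * (r : ℝ))).add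
      ((hasSum_poisson_descFactorial r 0).mul_right ((r : ℝ) ^ 2)))
  convert h using 1
  · ext n
    simp only [Nat.cast_descFactorial_two, Nat.descFactorial_one, Nat.descFactorial_zero]
    push_cast
    ring
  · ring

lemma hasSum_poisson_sub_pow_three (r : ℝ≥0) :
    HasSum (fun n : ℕ => exp (-r) * r ^ n / n ! * ((n : ℝ) - r) ^ 3) r := by
  have h := (hasSum_poisson_descFactorial r 3).add
    (((hasSum_poisson_descFactorial r 2).mul_right (3 - 3 * (r : ℝ))).add
      (((hasSum_poisson_descFactorial r 1).mul_right (1 - 3 * (r : ℝ) + 3 * (r : ℝ) ^ 2)).add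
        ((hasSum_poisson_descFactorial r 0).mul_right (-(r : ℝ) ^ 3))))
  convert h using 1
  · ext n
    simp only [← descPochhammer_eval_eq_descFactorial ℝ, descPochhammer_succ_right,
      descPochhammer_zero, Polynomial.eval_mul, Polynomial.eval_sub, Polynomial.eval_X,
      Polynomial.eval_one, Polynomial.eval_natCast]
    ring
  · ring

lemma hasSum_poisson_sub_sq_mul_add (r : ℝ≥0) :
    HasSum (fun n : ℕ => exp (-r) * r ^ n / n ! * (((n : ℝ) - r) ^ 2 * (1 + r + n) / 2))
      (r + (r : ℝ) ^ 2) := by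
  have h := (((hasSum_poisson_sub_sq r).mul_right (1 + 2 * (r : ℝ))).add
    (hasSum_poisson_sub_pow_three r)).div_const 2
  have hsplit (n : ℕ) : exp (-r) * r ^ n / n ! * (((n : ℝ) - r) ^ 2 * (1 + r + n) / 2) =
      (exp (-r) * r ^ n / n ! * ((n : ℝ) - r) ^ 2 * (1 + 2 * r) +
        exp (-r) * r ^ n / n ! * ((n : ℝ) - r) ^ 3) / 2 := by
    ring
  rw [funext hsplit, show (r : ℝ) + r ^ 2 = (r * (1 + 2 * r) + r) / 2 by ring]
  exact h

lemma rpow_five_halves_le {t : ℝ} (ht : 0 ≤ t) : t ^ ((5 : ℝ) / 2) ≤ t ^ 2 * (1 + t) / 2 := by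
  have hsqrt : √t ≤ (1 + t) / 2 := by nlinarith [sq_nonneg (√t - 1), sq_sqrt ht]
  calc t ^ ((5 : ℝ) / 2) = t ^ 2 * √t := by
        rw [show (5 : ℝ) / 2 = 2 + 1 / 2 by norm_num, rpow_add' ht (by norm_num),
          Real.sqrt_eq_rpow]
        norm_cast
    _ ≤ t ^ 2 * ((1 + t) / 2) := by gcongr
    _ = t ^ 2 * (1 + t) / 2 := by ring

lemma abs_sub_rpow_five_halves_le {a b : ℝ} (ha : 0 ≤ a) (hb : 0 ≤ b) :
    |a - b| ^ ((5 : ℝ) / 2) ≤ (a - b) ^ 2 * (1 + b + a) / 2 := by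
  have hab : |a - b| ≤ a + b := abs_sub _ _ |>.trans (by rw [abs_of_nonneg ha, abs_of_nonneg hb])
  calc |a - b| ^ ((5 : ℝ) / 2) ≤ |a - b| ^ 2 * (1 + |a - b|) / 2 :=
        rpow_five_halves_le (abs_nonneg _)
    _ ≤ (a - b) ^ 2 * (1 + b + a) / 2 := by
        rw [sq_abs]
        gcongr _ * ?_ / 2
        linarith

lemma integral_abs_sub_rpow_five_halves_poissonMeasure_le (r : ℝ≥0) :
    ∫ n, |(n : ℝ) - r| ^ ((5 : ℝ) / 2) ∂poissonMeasure r ≤ r + (r : ℝ) ^ 2 := by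
  have hbound := hasSum_poisson_sub_sq_mul_add r
  have hle (n : ℕ) : exp (-r) * r ^ n / n ! * |(n : ℝ) - r| ^ ((5 : ℝ) / 2) ≤
      exp (-r) * r ^ n / n ! * (((n : ℝ) - r) ^ 2 * (1 + r + n) / 2) := by
    gcongr
    exact abs_sub_rpow_five_halves_le n.cast_nonneg r.coe_nonneg
  have hnonneg (n : ℕ) : 0 ≤ exp (-r) * r ^ n / n ! * |(n : ℝ) - r| ^ ((5 : ℝ) / 2) := by
    positivity
  rw [integral_poissonMeasure]
  simp only [smul_eq_mul]
  exact hasSum_le hle (Summable.of_nonneg_of_le hnonneg hle hbound.summable).hasSum hbound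

theorem poisson_abs_central_moment_five_halves_general
    {Ω : Type*} [MeasurableSpace Ω] (P : Measure Ω)
    (Y : Ω → ℕ) (l : ℝ≥0) (hl1 : l ≤ 1)
    (hY : Measure.map Y P = poissonMeasure l) :
    ∫ ω, |(Y ω : ℝ) - l| ^ ((5 : ℝ) / 2) ∂P ≤ Real.sqrt 8 * l := by
  have hlaw : HasLaw Y (poissonMeasure l) P :=
    ⟨.of_map_ne_zero (hY ▸ IsProbabilityMeasure.ne_zero _), hY⟩
  have hl1' : (l : ℝ) ≤ 1 := hl1
  have hsqrt8 : (2 : ℝ) ≤ √8 := le_sqrt_of_sq_le (by norm_num)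
  calc ∫ ω, |(Y ω : ℝ) - l| ^ ((5 : ℝ) / 2) ∂P
      = ∫ n, |(n : ℝ) - l| ^ ((5 : ℝ) / 2) ∂poissonMeasure l :=
        hlaw.integral_comp (f := fun n : ℕ => |(n : ℝ) - l| ^ ((5 : ℝ) / 2))
          (measurable_from_nat.aestronglyMeasurable)
    _ ≤ l + (l : ℝ) ^ 2 := integral_abs_sub_rpow_five_halves_poissonMeasure_le l
    _ ≤ 2 * l := by nlinarith [l.coe_nonneg]
    _ ≤ √8 * l := by gcongr

theorem poisson_abs_central_moment_five_halves
    {Ω : Type*} [MeasurableSpace Ω] (P : Measure Ω) [IsProbabilityMeasure P]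
    (Y : Ω → ℕ) (l : ℝ≥0) (hl0 : 0 < l) (hl1 : l ≤ 1)
    (hY : Measure.map Y P = poissonMeasure l) :
    ∫ ω, |(Y ω : ℝ) - l| ^ ((5 : ℝ) / 2) ∂P ≤ Real.sqrt 8 * l :=
  poisson_abs_central_moment_five_halves_general P Y l hl1 hY
end

section
/- If Y has a Poisson distribution with parameter λ ∈ (0,1], then E(Y^(5/2)) ≤ √15 · λ. -/
/-!
The polynomial `n + (19/10) n(n-1) + (3/10) n(n-1)(n-2)` dominates `n ^ (5/2)` on `ℕ`, and its
Poisson expectation follows from the factorial moments `E[Y(Y-1)⋯(Y-k+1)] = λ ^ k`: it is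
`λ + (19/10) λ² + (3/10) λ³ ≤ (16/5) λ ≤ √15 λ` for `λ ≤ 1`.
-/

open NNReal MeasureTheory ProbabilityTheory Real
open scoped Nat

theorem hasSum_poisson_mul_descFactorial (r : ℝ≥0) (k : ℕ) :
    HasSum (fun n : ℕ => exp (-r) * r ^ n / n ! * n.descFactorial k) ((r : ℝ) ^ k) := by
  rw [← hasSum_nat_add_iff' k, Finset.sum_eq_zero fun i hi => by
    simp [Nat.descFactorial_eq_zero_iff_lt.mpr (Finset.mem_range.mp hi)], sub_zero]
  have hterm (n : ℕ) : exp (-r) * r ^ (n + k) / (n + k)! * (n + k).descFactorial k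
      = r ^ k * (exp (-r) * r ^ n / n !) := by
    have hfac : n ! * (n + k).descFactorial k = (n + k)! := by
      simpa using Nat.factorial_mul_descFactorial (Nat.le_add_left k n)
    rw [← hfac]
    push_cast
    field_simp
    ring
  simpa only [hterm, mul_one] using (hasSum_one_poissonMeasure r).mul_left ((r : ℝ) ^ k)

theorem hasSum_poisson_mul_cubic (r : ℝ≥0) (a b c : ℝ) :
    HasSum (fun n : ℕ => exp (-r) * r ^ n / n ! *
        (a * n + b * (n * (n - 1)) + c * (n * (n - 1) * (n - 2))))
      (a * r + b * r ^ 2 + c * r ^ 3) := by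
  have hdesc (n : ℕ) : (n.descFactorial 3 : ℝ) = n * (n - 1) * (n - 2) := by
    rw [← descPochhammer_eval_eq_descFactorial, descPochhammer_eval_eq_prod_range]
    simp [Finset.prod_range_succ]
  have h := (((hasSum_poisson_mul_descFactorial r 1).mul_left a).add
    ((hasSum_poisson_mul_descFactorial r 2).mul_left b)).add
    ((hasSum_poisson_mul_descFactorial r 3).mul_left c)
  simp only [Nat.descFactorial_one, Nat.cast_descFactorial_two, hdesc, pow_one] at h
  simpa only [mul_add, mul_left_comm] using h

theorem rpow_five_halves_le_of_one_le {x : ℝ} (hx : 1 ≤ x) :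
    x ^ (5 / 2 : ℝ) ≤ x + 19 / 10 * (x * (x - 1)) + 3 / 10 * (x * (x - 1) * (x - 2)) := by
  obtain ⟨t, ht, rfl⟩ : ∃ t : ℝ, 1 ≤ t ∧ x = t ^ 2 :=
    ⟨√x, by simpa using Real.sqrt_le_sqrt hx, (Real.sq_sqrt (by linarith)).symm⟩
  have hpow : (t ^ 2) ^ (5 / 2 : ℝ) = t ^ 5 := by
    rw [← Real.rpow_natCast, ← Real.rpow_mul (by linarith)]
    norm_num
  -- `rhs - t ^ 5 = t ^ 2 (t - 1) (3 t ^ 3 - 7 t ^ 2 + 3 t + 3) / 10`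
  have hcubic : 0 ≤ 3 * t ^ 3 - 7 * t ^ 2 + 3 * t + 3 := by
    nlinarith [sq_nonneg (t - 1), mul_nonneg (sub_nonneg.2 ht) (sq_nonneg (t - 1))]
  rw [hpow]
  nlinarith [mul_nonneg (mul_nonneg (sq_nonneg t) (sub_nonneg.2 ht)) hcubic]

theorem natCast_rpow_five_halves_le (n : ℕ) :
    (n : ℝ) ^ (5 / 2 : ℝ) ≤ n + 19 / 10 * (n * (n - 1)) + 3 / 10 * (n * (n - 1) * (n - 2)) := by
  rcases Nat.eq_zero_or_pos n with rfl | hn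
  · norm_num
  · exact rpow_five_halves_le_of_one_le (by exact_mod_cast hn)

theorem poisson_moment_five_halves_general
    {Ω : Type*} [MeasurableSpace Ω] (P : Measure Ω) [IsProbabilityMeasure P]
    (Y : Ω → ℕ) (l : ℝ≥0) (hl1 : l ≤ 1)
    (hY : Measure.map Y P = poissonMeasure l) :
    ∫ ω, (Y ω : ℝ) ^ ((5 : ℝ) / 2) ∂P ≤ Real.sqrt 15 * l := by
  have hYm : AEMeasurable Y P := .of_map_ne_zero (hY ▸ IsProbabilityMeasure.ne_zero _)
  set w : ℕ → ℝ := fun n => exp (-l) * l ^ n / (n)!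
  have hcubic := hasSum_poisson_mul_cubic l 1 (19 / 10) (3 / 10)
  have hle (n : ℕ) : w n * (n : ℝ) ^ ((5 : ℝ) / 2) ≤
      w n * (1 * n + 19 / 10 * (n * (n - 1)) + 3 / 10 * (n * (n - 1) * (n - 2))) :=
    mul_le_mul_of_nonneg_left (by simpa using natCast_rpow_five_halves_le n) (by positivity)
  have hsummable : Summable fun n => w n * (n : ℝ) ^ ((5 : ℝ) / 2) :=
    hcubic.summable.of_nonneg_of_le (fun n => by positivity) hle
  have hl : (l : ℝ) ≤ 1 := by exact_mod_cast hl1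
  have hsqrt : (16 / 5 : ℝ) ≤ √15 := Real.le_sqrt_of_sq_le (by norm_num)
  calc ∫ ω, (Y ω : ℝ) ^ ((5 : ℝ) / 2) ∂P = ∑' n, w n * (n : ℝ) ^ ((5 : ℝ) / 2) := by
        rw [← integral_map (f := fun n : ℕ => (n : ℝ) ^ ((5 : ℝ) / 2)) hYm .of_discrete, hY,
          integral_poissonMeasure]
        rfl
    _ ≤ 1 * l + 19 / 10 * l ^ 2 + 3 / 10 * l ^ 3 := hasSum_le hle hsummable.hasSum hcubic
    _ ≤ √15 * l := by nlinarith [mul_le_mul_of_nonneg_right hsqrt l.coe_nonneg, l.coe_nonneg]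

theorem poisson_moment_five_halves
    {Ω : Type*} [MeasurableSpace Ω] (P : Measure Ω) [IsProbabilityMeasure P]
    (Y : Ω → ℕ) (l : ℝ≥0) (hl0 : 0 < l) (hl1 : l ≤ 1)
    (hY : Measure.map Y P = poissonMeasure l) :
    ∫ ω, (Y ω : ℝ) ^ ((5 : ℝ) / 2) ∂P ≤ Real.sqrt 15 * l :=
  poisson_moment_five_halves_general P Y l hl1 hY
end

section
/- In the setting of the two-point counterexample (p_{2n}=1/n, p_{2n+1}=n^{-1/√(log n)}, F_n = p_{2n+1}X_{2n} + √(p_{2n+1}(1-p_{2n+1}))X_{2n}X_{2n+1}), F_n → 0 almost surely, but p_{2n+1} X_{2n} does not converge to 0 almost surely. -/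
open MeasureTheory ProbabilityTheory Real Filter

/-!
Write `X_k = standardize p_k Y_k`. Since `p + √(p(1-p)) · standardize p y = (y + 1)/2`, the
variable `F_n` equals `X_{2n}` on `{Y_{2n+1} = 1}` and vanishes elsewhere. The events
`{Y_{2n} = Y_{2n+1} = 1}` have probabilities `p_{2n} p_{2n+1} = e^{-√(log n)}/n`, summable by
Cauchy condensation, so almost surely only finitely many occur (first Borel–Cantelli lemma).
Afterwards `F_n` is either `0` or `X_{2n} = -√(p_{2n}/(1-p_{2n})) → 0`. On the other hand
`∑ p_{2n} = ∑ 1/n = ∞`, so almost surely `Y_{2n} = 1` infinitely often (second Borel–Cantelli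
lemma), and there `p_{2n+1} X_{2n} = e^{-√(log n)} √(n-1) ≥ 1` for large `n`.
-/

/-- A `±1`-valued variable with `P(Y = 1) = p` has mean `2p - 1` and variance `4p(1-p)`. -/
noncomputable def standardize (p y : ℝ) : ℝ := (y - 2 * p + 1) / (2 * √(p * (1 - p)))

lemma add_sqrt_mul_standardize {p : ℝ} (hp : p ∈ Set.Ioo 0 1) (y : ℝ) :
    p + √(p * (1 - p)) * standardize p y = (y + 1) / 2 := by
  have : √(p * (1 - p)) ≠ 0 := (sqrt_pos.2 (mul_pos hp.1 (sub_pos.2 hp.2))).ne'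
  unfold standardize
  field_simp
  ring

lemma standardize_one {p : ℝ} (hp : p ∈ Set.Ioo 0 1) :
    standardize p 1 = √((1 - p) / p) := by
  obtain ⟨h0, h1⟩ := hp
  have hq : 0 < 1 - p := by linarith
  rw [standardize, sqrt_div' _ h0.le, sqrt_mul h0.le]
  have := sq_sqrt hq.le
  have := sqrt_pos.2 hq
  have := sqrt_pos.2 h0
  field_simp
  nlinarith

lemma standardize_neg_one {p : ℝ} (hp : p ∈ Set.Ioo 0 1) :
    standardize p (-1) = -√(p / (1 - p)) := by
  obtain ⟨h0, h1⟩ := hp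
  have hq : 0 < 1 - p := by linarith
  rw [standardize, sqrt_div' _ hq.le, sqrt_mul h0.le]
  have := sq_sqrt h0.le
  have := sqrt_pos.2 hq
  have := sqrt_pos.2 h0
  field_simp
  nlinarith

lemma rpow_neg_one_div_sqrt_log {x : ℝ} (hx : 1 < x) :
    x ^ (-1 / √(log x)) = exp (-√(log x)) := by
  have hlog := log_pos hx
  have := sq_sqrt hlog.le
  have := sqrt_pos.2 hlog
  rw [rpow_def_of_pos (by linarith)]
  congr 1
  field_simp
  linarith

lemma exp_neg_sqrt_le {x : ℝ} (hx : 0 < x) : exp (-√x) ≤ 24 / x ^ 2 := by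
  have h := pow_div_factorial_le_exp (√x) (sqrt_nonneg x) 4
  rw [show √x ^ 4 = x ^ 2 by rw [show 4 = 2 * 2 from rfl, pow_mul, sq_sqrt hx.le]] at h
  rw [exp_neg, inv_le_iff_one_le_mul₀' (exp_pos _), mul_div_assoc', one_le_div (by positivity)]
  norm_num [Nat.factorial] at h
  linarith

lemma summable_exp_neg_sqrt_log_div_natCast :
    Summable fun n : ℕ => exp (-√(log n)) / n := by
  refine (summable_condensed_iff_of_nonneg (fun n => by positivity) fun m n hm hmn => ?_).1 ?_
  · have hm' : (0 : ℝ) < m := by exact_mod_cast hm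
    have hmn' : (m : ℝ) ≤ n := by exact_mod_cast hmn
    refine div_le_div₀ (exp_pos _).le (exp_le_exp.2 (neg_le_neg (sqrt_le_sqrt ?_))) hm' hmn'
    exact log_le_log hm' hmn'
  · have hlog2 : 0 < log 2 := log_pos one_lt_two
    -- the condensed terms are `e^{-√(k log 2)} ≤ 24 / (k log 2)²`
    have hterm : ∀ k : ℕ, (2 : ℝ) ^ k * (exp (-√(log ↑(2 ^ k : ℕ))) / ↑(2 ^ k : ℕ))
        = exp (-√(k * log 2)) := by
      intro k
      push_cast
      rw [log_pow]
      field_simp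
    simp_rw [hterm]
    refine ((summable_one_div_nat_pow.2 one_lt_two).mul_left
      (24 / log 2 ^ 2)).of_norm_bounded_eventually_nat ?_
    filter_upwards [eventually_gt_atTop 0] with k hk
    have hk' : (0 : ℝ) < k := by exact_mod_cast hk
    rw [norm_of_nonneg (exp_pos _).le]
    calc exp (-√(k * log 2)) ≤ 24 / (k * log 2) ^ 2 := exp_neg_sqrt_le (by positivity)
      _ = 24 / log 2 ^ 2 * (1 / (k : ℝ) ^ 2) := by field_simp

lemma exp_sqrt_log_le_sqrt_sub_one {x : ℝ} (hx : 0 < x) (hlog : 16 ≤ log x) :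
    exp √(log x) ≤ √(x - 1) := by
  set s := √(log x)
  have hs2 : s ^ 2 = log x := sq_sqrt (by linarith)
  have hs4 : 4 ≤ s := by
    rw [show (4 : ℝ) = √16 by rw [show (16 : ℝ) = 4 ^ 2 by norm_num, sqrt_sq (by norm_num)]]
    exact sqrt_le_sqrt hlog
  have hx17 : 17 ≤ x := by
    have := add_one_le_exp (log x)
    rw [exp_log hx] at this
    linarith
  apply le_sqrt_of_sq_le
  calc exp s ^ 2 = exp (2 * s) := by rw [← exp_nat_mul]; norm_num
    _ ≤ exp (log x / 2) := exp_le_exp.2 (by nlinarith)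
    _ = √x := by rw [← log_sqrt hx.le, exp_log (sqrt_pos.2 hx)]
    _ ≤ x - 1 := by
      rw [sqrt_le_left (by linarith)]
      nlinarith

lemma eventually_one_le_exp_neg_sqrt_log_mul_standardize_one_div :
    ∀ᶠ n : ℕ in atTop, 1 ≤ exp (-√(log n)) * standardize (1 / n) 1 := by
  filter_upwards [eventually_ge_atTop 2,
    (tendsto_log_atTop.comp tendsto_natCast_atTop_atTop).eventually_ge_atTop 16] with n hn hlog
  have hn' : (1 : ℝ) < n := Nat.one_lt_cast.2 hn
  have hinv : (1 : ℝ) / n ∈ Set.Ioo 0 1 := ⟨by positivity, (div_lt_one (by positivity)).2 hn'⟩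
  rw [standardize_one hinv, show (1 - 1 / (n : ℝ)) / (1 / n) = n - 1 by field_simp, exp_neg,
    inv_mul_eq_div, one_le_div (exp_pos _)]
  exact exp_sqrt_log_le_sqrt_sub_one (by positivity) hlog

lemma norm_standardize_mul_le {p y y' : ℝ} (hp : p ∈ Set.Ioo 0 1) (hy : y = -1 ∨ y = 1)
    (hy' : y' = -1 ∨ y' = 1) (h : ¬(y = 1 ∧ y' = 1)) :
    ‖standardize p y * ((y' + 1) / 2)‖ ≤ √(p / (1 - p)) := by
  rcases hy' with rfl | rfl
  · norm_num
  · obtain rfl : y = -1 := hy.resolve_right fun hy1 => h ⟨hy1, rfl⟩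
    norm_num [standardize_neg_one hp, abs_of_nonneg (sqrt_nonneg _)]

lemma Filter.Tendsto.sqrt_div_one_sub {α : Type*} {l : Filter α} {f : α → ℝ}
    (hf : Tendsto f l (nhds 0)) : Tendsto (fun a => √(f a / (1 - f a))) l (nhds 0) := by
  simpa using (hf.div (tendsto_const_nhds.sub hf) (by norm_num)).sqrt

lemma ProbabilityTheory.iIndepFun.iIndepSet_preimage {Ω ι β : Type*} [MeasurableSpace Ω]
    [MeasurableSpace β] {μ : Measure Ω} {f : ι → Ω → β} (hf : iIndepFun f μ)
    (hfm : ∀ i, Measurable (f i)) {t : ι → Set β} (ht : ∀ i, MeasurableSet (t i)) :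
    iIndepSet (fun i => f i ⁻¹' t i) μ := by
  rw [iIndepSet_iff_meas_biInter fun i => hfm i (ht i)]
  exact fun s => hf.measure_inter_preimage_eq_mul s fun i _ => ht i

lemma ae_frequently_mem_of_iIndepSet {Ω : Type*} [MeasurableSpace Ω] {μ : Measure Ω}
    {s : ℕ → Set Ω} (hsm : ∀ n, MeasurableSet (s n)) (hs : iIndepSet s μ)
    (hs' : ∑' n, μ (s n) = ⊤) : ∀ᵐ ω ∂μ, ∃ᶠ n in atTop, ω ∈ s n := by
  have := hs.isProbabilityMeasure
  filter_upwards [(mem_ae_iff_prob_eq_one (MeasurableSet.measurableSet_limsup hsm)).2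
    (measure_limsup_eq_one hsm hs hs')] with ω hω
  exact mem_limsup_iff_frequently_mem.1 hω

lemma ENNReal.tsum_ofReal_eq_top_of_not_summable {ι : Type*} {f : ι → ℝ} (hf : ∀ i, 0 ≤ f i)
    (h : ¬Summable f) : ∑' i, ENNReal.ofReal (f i) = ⊤ := by
  by_contra hne
  exact h <| (ENNReal.summable_toReal hne).congr fun i => ENNReal.toReal_ofReal (hf i)

lemma ae_eventually_not_and_of_summable_mul {Ω ι β : Type*} [MeasurableSpace Ω]
    [MeasurableSpace β] [MeasurableSingletonClass β] {μ : Measure Ω} {Y : ι → Ω → β}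
    (hY : iIndepFun Y μ) {f g : ℕ → ι} (hfg : ∀ n, f n ≠ g n) {a : β} {r : ι → ℝ}
    (hr : ∀ i, 0 ≤ r i) (hYr : ∀ i, μ {ω | Y i ω = a} = ENNReal.ofReal (r i))
    (hsum : Summable fun n => r (f n) * r (g n)) :
    ∀ᵐ ω ∂μ, ∀ᶠ n in atTop, ¬(Y (f n) ω = a ∧ Y (g n) ω = a) := by
  refine ae_eventually_notMem (s := fun n => Y (f n) ⁻¹' {a} ∩ Y (g n) ⁻¹' {a}) ?_
  have hinter : ∀ n, μ (Y (f n) ⁻¹' {a} ∩ Y (g n) ⁻¹' {a})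
      = ENNReal.ofReal (r (f n) * r (g n)) := fun n => by
    rw [(hY.indepFun (hfg n)).measure_inter_preimage_eq_mul _ _ (measurableSet_singleton a)
      (measurableSet_singleton a), ENNReal.ofReal_mul (hr _)]
    exact congr_arg₂ _ (hYr _) (hYr _)
  simp_rw [hinter]
  exact hsum.tsum_ofReal_ne_top

lemma ae_frequently_eq_of_not_summable {Ω β : Type*} [MeasurableSpace Ω]
    [MeasurableSpace β] [MeasurableSingletonClass β] {μ : Measure Ω} {Y : ℕ → Ω → β}
    (hY : iIndepFun Y μ) (hYm : ∀ n, Measurable (Y n)) {a : β} {r : ℕ → ℝ}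
    (hr : ∀ n, 0 ≤ r n) (hYr : ∀ n, μ {ω | Y n ω = a} = ENNReal.ofReal (r n))
    (hsum : ¬Summable r) : ∀ᵐ ω ∂μ, ∃ᶠ n in atTop, Y n ω = a := by
  refine ae_frequently_mem_of_iIndepSet (s := fun n => Y n ⁻¹' {a})
    (fun n => hYm n (measurableSet_singleton a))
    (hY.iIndepSet_preimage hYm fun _ => measurableSet_singleton a) ?_
  simp_rw [Set.preimage, Set.mem_singleton_iff, hYr]
  exact ENNReal.tsum_ofReal_eq_top_of_not_summable hr hsum

lemma not_ae_tendsto_zero_of_frequently {Ω : Type*} [MeasurableSpace Ω] {μ : Measure Ω}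
    [NeZero μ] {Z : ℕ → Ω → ℝ} {E : ℕ → Ω → Prop} {ε : ℝ} (hε : 0 < ε)
    (hE : ∀ᵐ ω ∂μ, ∃ᶠ n in atTop, E n ω) (hZ : ∀ᶠ n in atTop, ∀ ω, E n ω → ε ≤ Z n ω) :
    ¬∀ᵐ ω ∂μ, Tendsto (fun n => Z n ω) atTop (nhds 0) := by
  intro hZ0
  obtain ⟨ω, hω0, hωE⟩ := (hZ0.and hE).exists
  obtain ⟨n, hEn, hlt, hle⟩ :=
    (hωE.and_eventually ((hω0.eventually (gt_mem_nhds hε)).and hZ)).exists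
  linarith [hle ω hEn]

theorem counterexample_as_convergence
    {Ω : Type*} [MeasurableSpace Ω] (P : Measure Ω) [IsProbabilityMeasure P]
    (Y : ℕ → Ω → ℝ) (p : ℕ → ℝ)
    (hmeas : ∀ n, Measurable (Y n))
    (hindep : iIndepFun Y P)
    (hval : ∀ n ω, Y n ω = -1 ∨ Y n ω = 1)
    (hp : ∀ k, p k ∈ Set.Ioo (0 : ℝ) 1)
    (hp1 : ∀ k, P {ω | Y k ω = 1} = ENNReal.ofReal (p k))
    (hp_even : ∀ n, 2 ≤ n → p (2 * n) = 1 / n)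
    (hp_odd : ∀ n, 2 ≤ n → p (2 * n + 1) = (n : ℝ) ^ (-1 / Real.sqrt (Real.log n)))
    (X : ℕ → Ω → ℝ)
    (hX : ∀ k ω, X k ω = (Y k ω - 2 * p k + 1) / (2 * Real.sqrt (p k * (1 - p k))))
    (F : ℕ → Ω → ℝ)
    (hF : ∀ n ω, F n ω = p (2 * n + 1) * X (2 * n) ω
      + Real.sqrt (p (2 * n + 1) * (1 - p (2 * n + 1))) * X (2 * n) ω * X (2 * n + 1) ω) :
    (∀ᵐ ω ∂P, Tendsto (fun n => F n ω) atTop (nhds 0)) ∧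
      ¬ (∀ᵐ ω ∂P, Tendsto (fun n => p (2 * n + 1) * X (2 * n) ω) atTop (nhds 0)) := by
  have hX' : ∀ k ω, X k ω = standardize (p k) (Y k ω) := hX
  have hp_even' : (fun n => p (2 * n)) =ᶠ[atTop] fun n : ℕ => 1 / (n : ℝ) :=
    eventually_atTop.2 ⟨2, hp_even⟩
  have hp_odd' : ∀ n, 2 ≤ n → p (2 * n + 1) = exp (-√(log n)) := fun n hn => by
    rw [hp_odd n hn, rpow_neg_one_div_sqrt_log (Nat.one_lt_cast.2 hn)]
  constructor
  · have hF' : ∀ n ω,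
        F n ω = standardize (p (2 * n)) (Y (2 * n) ω) * ((Y (2 * n + 1) ω + 1) / 2) := by
      intro n ω
      rw [hF, ← add_sqrt_mul_standardize (hp (2 * n + 1)), hX', hX']
      ring
    have hpair : Summable fun n => p (2 * n) * p (2 * n + 1) := by
      refine (summable_congr_atTop ?_).2 summable_exp_neg_sqrt_log_div_natCast
      filter_upwards [eventually_ge_atTop 2] with n hn
      rw [hp_even n hn, hp_odd' n hn]
      ring
    filter_upwards [ae_eventually_not_and_of_summable_mul hindep (fun n => by omega)
      (fun k => (hp k).1.le) hp1 hpair] with ω hω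
    refine squeeze_zero_norm' ?_
      (tendsto_one_div_atTop_nhds_zero_nat.congr' hp_even'.symm).sqrt_div_one_sub
    filter_upwards [hω] with n hn
    rw [hF']
    exact norm_standardize_mul_le (hp _) (hval _ ω) (hval _ ω) hn
  · refine not_ae_tendsto_zero_of_frequently (E := fun n ω => Y (2 * n) ω = 1) one_pos ?_ ?_
    · have hindep_even : iIndepFun (fun n => Y (2 * n)) P :=
        hindep.precomp (mul_right_injective₀ two_ne_zero)
      refine ae_frequently_eq_of_not_summable hindep_even (fun n => hmeas _)
        (fun n => (hp _).1.le) (fun n => hp1 _) ?_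
      rw [summable_congr_atTop hp_even']
      exact not_summable_one_div_natCast
    · filter_upwards [eventually_one_le_exp_neg_sqrt_log_mul_standardize_one_div,
        eventually_ge_atTop 2] with n h hn ω hω
      rwa [hX', hω, hp_even n hn, hp_odd' n hn]
end

section
/- Let (Y_n) be independent Poisson variables with E(Y_{2n}) = n^{-3/4} and E(Y_{2n+1}) = n^{-5/16}, and set X_k = (Y_k - λ_k)/√λ_k, F_n = X_{2n} Y_{2n+1}. Then E(|F_n|^{5/2}) ≤ √120 · n^{-1/8}, so F_n → 0 in L^{5/2}. -/
/-!
By independence, `E|F_n|^{5/2} = E|X_{2n}|^{5/2} · E(Y_{2n+1}^{5/2})`, and both factors are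
controlled by polynomial moments of a Poisson variable `Y` of mean `λ ≤ 1`, which follow from the
factorial moments `E[Y (Y - 1) ⋯ (Y - m + 1)] = λ^m`. Weighted AM-GM gives
`|z|^{5/2} ≤ ¾ z² + ¼ z⁴`, so `E|Y - λ|^{5/2} ≤ ¾ λ + ¼ (λ + 3λ²) ≤ 7/4 · λ`; and
`k^{5/2} ≤ k³` on `ℕ` gives `E(Y^{5/2}) ≤ λ³ + 3λ² + λ ≤ 5λ`. Hence
`E|F_n|^{5/2} ≤ 35/4 · λ_{2n}^{-1/4} λ_{2n+1} = 35/4 · n^{-1/8}`, and `35/4 ≤ √120`.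
-/

open MeasureTheory ProbabilityTheory Real Filter
open scoped NNReal Nat

lemma abs_rpow_le_sq_add_pow_four {p : ℝ} (hp₂ : 2 ≤ p) (hp₄ : p ≤ 4) (z : ℝ) :
    |z| ^ p ≤ (4 - p) / 2 * z ^ 2 + (p - 2) / 2 * z ^ 4 := by
  have hz := abs_nonneg z
  calc |z| ^ p = (|z| ^ (2 : ℝ)) ^ ((4 - p) / 2) * (|z| ^ (4 : ℝ)) ^ ((p - 2) / 2) := by
        rw [← rpow_mul hz, ← rpow_mul hz, ← rpow_add' hz (by linarith)]
        ring_nf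
    _ = (z ^ 2) ^ ((4 - p) / 2) * (z ^ 4) ^ ((p - 2) / 2) := by
        rw [show |z| ^ (2 : ℝ) = z ^ 2 by norm_cast; exact sq_abs z,
          show |z| ^ (4 : ℝ) = z ^ 4 by norm_cast; exact Even.pow_abs ⟨2, rfl⟩ z]
    _ ≤ (4 - p) / 2 * z ^ 2 + (p - 2) / 2 * z ^ 4 :=
        geom_mean_le_arith_mean2_weighted (by linarith) (by linarith) (by positivity)
          (by positivity) (by ring)

lemma natCast_rpow_le_pow {p : ℝ} {m : ℕ} (hp : 0 < p) (hpm : p ≤ m) (k : ℕ) :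
    (k : ℝ) ^ p ≤ (k : ℝ) ^ m := by
  rcases k.eq_zero_or_pos with rfl | hk
  · rw [Nat.cast_zero, zero_rpow hp.ne']
    positivity
  · rw [← rpow_natCast]
    exact rpow_le_rpow_of_exponent_le (by exact_mod_cast hk) hpm

namespace ProbabilityTheory

section HasSum

variable {r : ℝ≥0} {f : ℕ → ℝ} {s : ℝ}

lemma integral_poissonMeasure_eq_of_hasSum
    (h : HasSum (fun n : ℕ ↦ exp (-r) * r ^ n / n ! * f n) s) : ∫ n, f n ∂poissonMeasure r = s := by
  simpa only [integral_poissonMeasure, smul_eq_mul] using h.tsum_eq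

lemma integrable_poissonMeasure_of_hasSum (hf : ∀ n, 0 ≤ f n)
    (h : HasSum (fun n : ℕ ↦ exp (-r) * r ^ n / n ! * f n) s) : Integrable f (poissonMeasure r) :=
  integrable_poissonMeasure_iff.mpr <| by simpa only [norm_of_nonneg (hf _)] using h.summable

end HasSum

section Moments

variable (r : ℝ≥0)

lemma hasSum_descFactorial_poissonMeasure (m : ℕ) :
    HasSum (fun n : ℕ ↦ exp (-r) * r ^ n / n ! * (n.descFactorial m : ℝ)) ((r : ℝ) ^ m) := by
  have hvanish : ∀ n ∈ Finset.range m, exp (-r) * r ^ n / n ! * (n.descFactorial m : ℝ) = 0 :=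
    fun n hn ↦ by simp [Nat.descFactorial_eq_zero_iff_lt.mpr (Finset.mem_range.mp hn)]
  rw [← hasSum_nat_add_iff' m, Finset.sum_eq_zero hvanish, sub_zero]
  have hshift : ∀ j : ℕ, exp (-r) * r ^ (j + m) / (j + m)! * ((j + m).descFactorial m : ℝ)
      = r ^ m * (exp (-r) * r ^ j / j !) := by
    intro j
    have hfac : (j ! : ℝ) * (j + m).descFactorial m = (j + m)! := by
      exact_mod_cast Nat.add_sub_cancel j m ▸ Nat.factorial_mul_descFactorial (Nat.le_add_left m j)
    field_simp
    rw [← hfac, pow_add]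
    ring
  simpa only [hshift, mul_one] using (hasSum_one_poissonMeasure r).mul_left ((r : ℝ) ^ m)

open Polynomial in
lemma hasSum_sub_sq_poissonMeasure :
    HasSum (fun n : ℕ ↦ exp (-r) * r ^ n / n ! * ((n : ℝ) - r) ^ 2) r := by
  convert ((hasSum_descFactorial_poissonMeasure r 2).add
    ((hasSum_descFactorial_poissonMeasure r 1).mul_left (1 - 2 * (r : ℝ)))).add
    ((hasSum_descFactorial_poissonMeasure r 0).mul_left ((r : ℝ) ^ 2)) using 1
  · ext n
    simp only [← descPochhammer_eval_eq_descFactorial ℝ, descPochhammer_succ_eval,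
      descPochhammer_zero, eval_one]
    ring
  · ring

open Polynomial in
lemma hasSum_sub_pow_four_poissonMeasure :
    HasSum (fun n : ℕ ↦ exp (-r) * r ^ n / n ! * ((n : ℝ) - r) ^ 4) (r + 3 * (r : ℝ) ^ 2) := by
  convert ((((hasSum_descFactorial_poissonMeasure r 4).add
    ((hasSum_descFactorial_poissonMeasure r 3).mul_left (6 - 4 * (r : ℝ)))).add
    ((hasSum_descFactorial_poissonMeasure r 2).mul_left (7 - 12 * (r : ℝ) + 6 * (r : ℝ) ^ 2))).add
    ((hasSum_descFactorial_poissonMeasure r 1).mul_left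
      (1 - 4 * (r : ℝ) + 6 * (r : ℝ) ^ 2 - 4 * (r : ℝ) ^ 3))).add
    ((hasSum_descFactorial_poissonMeasure r 0).mul_left ((r : ℝ) ^ 4)) using 1
  · ext n
    simp only [← descPochhammer_eval_eq_descFactorial ℝ, descPochhammer_succ_eval,
      descPochhammer_zero, eval_one]
    ring
  · ring

open Polynomial in
lemma hasSum_pow_three_poissonMeasure :
    HasSum (fun n : ℕ ↦ exp (-r) * r ^ n / n ! * (n : ℝ) ^ 3)
      ((r : ℝ) ^ 3 + 3 * (r : ℝ) ^ 2 + r) := by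
  convert ((hasSum_descFactorial_poissonMeasure r 3).add
    ((hasSum_descFactorial_poissonMeasure r 2).mul_left 3)).add
    (hasSum_descFactorial_poissonMeasure r 1) using 1
  · ext n
    simp only [← descPochhammer_eval_eq_descFactorial ℝ, descPochhammer_succ_eval,
      descPochhammer_zero, eval_one]
    ring
  · ring

variable {p : ℝ}

lemma integral_abs_sub_rpow_poissonMeasure_le (hp₂ : 2 ≤ p) (hp₄ : p ≤ 4) :
    ∫ n, |(n : ℝ) - r| ^ p ∂poissonMeasure r ≤ r + 3 * (p - 2) / 2 * (r : ℝ) ^ 2 := by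
  let u (n : ℕ) : ℝ := (4 - p) / 2 * ((n : ℝ) - r) ^ 2 + (p - 2) / 2 * ((n : ℝ) - r) ^ 4
  have hu : ∀ n, 0 ≤ u n := fun n ↦ by
    have := sub_nonneg.mpr hp₂; have := sub_nonneg.mpr hp₄; positivity
  have hsum : HasSum (fun n : ℕ ↦ exp (-r) * r ^ n / n ! * u n)
      (r + 3 * (p - 2) / 2 * (r : ℝ) ^ 2) := by
    have h := ((hasSum_sub_sq_poissonMeasure r).mul_left ((4 - p) / 2)).add
      ((hasSum_sub_pow_four_poissonMeasure r).mul_left ((p - 2) / 2))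
    rw [show (4 - p) / 2 * (r : ℝ) + (p - 2) / 2 * (r + 3 * (r : ℝ) ^ 2)
      = r + 3 * (p - 2) / 2 * (r : ℝ) ^ 2 by ring] at h
    exact h.congr_fun fun n ↦ by simp only [u]; ring
  calc ∫ n, |(n : ℝ) - r| ^ p ∂poissonMeasure r ≤ ∫ n, u n ∂poissonMeasure r :=
        integral_mono_of_nonneg (ae_of_all _ fun _ ↦ by positivity)
          (integrable_poissonMeasure_of_hasSum hu hsum)
          (ae_of_all _ fun n ↦ abs_rpow_le_sq_add_pow_four hp₂ hp₄ _)
    _ = r + 3 * (p - 2) / 2 * (r : ℝ) ^ 2 := integral_poissonMeasure_eq_of_hasSum hsum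

lemma integral_natCast_rpow_poissonMeasure_le (hp₀ : 0 < p) (hp₃ : p ≤ 3) :
    ∫ n : ℕ, (n : ℝ) ^ p ∂poissonMeasure r ≤ (r : ℝ) ^ 3 + 3 * (r : ℝ) ^ 2 + r := by
  have hsum := hasSum_pow_three_poissonMeasure r
  calc ∫ n : ℕ, (n : ℝ) ^ p ∂poissonMeasure r ≤ ∫ n : ℕ, (n : ℝ) ^ 3 ∂poissonMeasure r :=
        integral_mono_of_nonneg (ae_of_all _ fun _ ↦ by positivity)
          (integrable_poissonMeasure_of_hasSum (fun _ ↦ by positivity) hsum)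
          (ae_of_all _ fun n ↦ natCast_rpow_le_pow hp₀ (by exact_mod_cast hp₃) n)
    _ = (r : ℝ) ^ 3 + 3 * (r : ℝ) ^ 2 + r := integral_poissonMeasure_eq_of_hasSum hsum

lemma integral_abs_sub_div_sqrt_rpow_poissonMeasure_le (hp₂ : 2 ≤ p) (hp₄ : p ≤ 4)
    (hr₀ : 0 < r) (hr₁ : r ≤ 1) :
    ∫ n, |((n : ℝ) - r) / √r| ^ p ∂poissonMeasure r
      ≤ (1 + 3 * (p - 2) / 2) * (r : ℝ) ^ (1 - p / 2) := by
  have hr₀' : (0 : ℝ) < r := hr₀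
  have hscale : ∀ x : ℝ, |x / √r| ^ p = |x| ^ p / (r : ℝ) ^ (p / 2) := fun x ↦ by
    rw [abs_div, abs_of_nonneg (sqrt_nonneg _), div_rpow (abs_nonneg _) (sqrt_nonneg _),
      sqrt_eq_rpow, ← rpow_mul hr₀'.le, one_div_mul_eq_div]
  simp_rw [hscale]
  rw [integral_div]
  calc (∫ n, |(n : ℝ) - r| ^ p ∂poissonMeasure r) / (r : ℝ) ^ (p / 2)
      ≤ (r + 3 * (p - 2) / 2 * (r : ℝ) ^ 2) / (r : ℝ) ^ (p / 2) := by
        gcongr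
        exact integral_abs_sub_rpow_poissonMeasure_le r hp₂ hp₄
    _ ≤ (1 + 3 * (p - 2) / 2) * r / (r : ℝ) ^ (p / 2) := by
        have hr₁' : (r : ℝ) ≤ 1 := hr₁
        gcongr
        nlinarith [mul_nonneg (sub_nonneg.mpr hp₂) (mul_nonneg hr₀'.le (sub_nonneg.mpr hr₁'))]
    _ = (1 + 3 * (p - 2) / 2) * (r : ℝ) ^ (1 - p / 2) := by
        rw [rpow_sub hr₀', rpow_one, mul_div_assoc]

lemma integral_natCast_rpow_poissonMeasure_le_of_le_one (hp₀ : 0 < p) (hp₃ : p ≤ 3)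
    (hr₁ : r ≤ 1) : ∫ n : ℕ, (n : ℝ) ^ p ∂poissonMeasure r ≤ 5 * r := by
  have hr₁' : (r : ℝ) ≤ 1 := hr₁
  exact (integral_natCast_rpow_poissonMeasure_le r hp₀ hp₃).trans (by nlinarith [r.2])

end Moments

lemma integral_abs_standardized_mul_rpow_le_of_indepFun {Ω : Type*} [MeasurableSpace Ω]
    {P : Measure Ω} {U V : Ω → ℕ} {a b : ℝ≥0} {p : ℝ} (hp₂ : 2 ≤ p) (hp₃ : p ≤ 3)
    (hU : Measurable U) (hV : Measurable V) (hUV : IndepFun U V P)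
    (hUa : P.map U = poissonMeasure a) (hVb : P.map V = poissonMeasure b)
    (ha₀ : 0 < a) (ha₁ : a ≤ 1) (hb₁ : b ≤ 1) :
    ∫ ω, |((U ω : ℝ) - a) / √a * V ω| ^ p ∂P
      ≤ 5 * (1 + 3 * (p - 2) / 2) * (a : ℝ) ^ (1 - p / 2) * b := by
  have hfactor : ∫ ω, |((U ω : ℝ) - a) / √a * V ω| ^ p ∂P
      = (∫ n, |((n : ℝ) - a) / √a| ^ p ∂poissonMeasure a)
        * ∫ n : ℕ, (n : ℝ) ^ p ∂poissonMeasure b := by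
    simp_rw [abs_mul, mul_rpow (abs_nonneg _) (abs_nonneg _), Nat.abs_cast]
    rw [hUV.integral_fun_comp_mul_comp (f := fun n : ℕ ↦ |((n : ℝ) - a) / √a| ^ p)
      (g := fun n : ℕ ↦ (n : ℝ) ^ p) hU.aemeasurable hV.aemeasurable .of_discrete .of_discrete,
      ← hUa, ← hVb, integral_map hU.aemeasurable .of_discrete,
      integral_map hV.aemeasurable .of_discrete]
  rw [hfactor]
  calc _ ≤ (1 + 3 * (p - 2) / 2) * (a : ℝ) ^ (1 - p / 2) * (5 * b) :=
        mul_le_mul (integral_abs_sub_div_sqrt_rpow_poissonMeasure_le a hp₂ (by linarith) ha₀ ha₁)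
          (integral_natCast_rpow_poissonMeasure_le_of_le_one b (by linarith) hp₃ hb₁)
          (integral_nonneg fun _ ↦ by positivity) (by have := sub_nonneg.mpr hp₂; positivity)
    _ = 5 * (1 + 3 * (p - 2) / 2) * (a : ℝ) ^ (1 - p / 2) * b := by ring

end ProbabilityTheory

theorem poisson_counterexample_L52_convergence_general
    {Ω : Type*} [MeasurableSpace Ω] (P : Measure Ω)
    (Y : ℕ → Ω → ℕ) (l : ℕ → ℝ≥0)
    (hmeas : ∀ n, Measurable (Y n))
    (hindep : iIndepFun Y P)
    (hpois : ∀ k, Measure.map (Y k) P = poissonMeasure (l k))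
    (hl_even : ∀ n, 1 ≤ n → (l (2 * n) : ℝ) = (n : ℝ) ^ (-(3 : ℝ) / 4))
    (hl_odd : ∀ n, 1 ≤ n → (l (2 * n + 1) : ℝ) = (n : ℝ) ^ (-(5 : ℝ) / 16))
    (X : ℕ → Ω → ℝ)
    (hX : ∀ k ω, X k ω = ((Y k ω : ℝ) - l k) / Real.sqrt (l k))
    (F : ℕ → Ω → ℝ)
    (hF : ∀ n ω, F n ω = X (2 * n) ω * (Y (2 * n + 1) ω : ℝ)) :
    (∀ n, 1 ≤ n → ∫ ω, |F n ω| ^ ((5 : ℝ) / 2) ∂P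
        ≤ Real.sqrt 120 * (n : ℝ) ^ (-(1 : ℝ) / 8)) ∧
      Tendsto (fun n => ∫ ω, |F n ω| ^ ((5 : ℝ) / 2) ∂P) atTop (nhds 0) := by
  have hbound : ∀ n, 1 ≤ n → ∫ ω, |F n ω| ^ ((5 : ℝ) / 2) ∂P
      ≤ Real.sqrt 120 * (n : ℝ) ^ (-(1 : ℝ) / 8) := by
    intro n hn
    have hn₀ : (0 : ℝ) < n := by exact_mod_cast hn
    have hrate_le_one : ∀ c : ℝ, c ≤ 0 → (n : ℝ) ^ c ≤ 1 :=
      fun c hc ↦ rpow_le_one_of_one_le_of_nonpos (by exact_mod_cast hn) hc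
    have ha₀ : 0 < l (2 * n) := by rw [← NNReal.coe_pos, hl_even n hn]; positivity
    have ha₁ : l (2 * n) ≤ 1 := by
      rw [← NNReal.coe_le_one, hl_even n hn]; exact hrate_le_one _ (by norm_num)
    have hb₁ : l (2 * n + 1) ≤ 1 := by
      rw [← NNReal.coe_le_one, hl_odd n hn]; exact hrate_le_one _ (by norm_num)
    simp_rw [hF, hX]
    calc _ ≤ 5 * (1 + 3 * (5 / 2 - 2) / 2) * (l (2 * n) : ℝ) ^ (1 - (5 / 2 : ℝ) / 2)
          * l (2 * n + 1) :=
          integral_abs_standardized_mul_rpow_le_of_indepFun (by norm_num) (by norm_num)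
            (hmeas _) (hmeas _) (hindep.indepFun (by omega)) (hpois _) (hpois _) ha₀ ha₁ hb₁
      _ = 35 / 4 * (n : ℝ) ^ (-(1 : ℝ) / 8) := by
          rw [hl_even n hn, hl_odd n hn, ← rpow_mul hn₀.le, mul_assoc, ← rpow_add hn₀]
          norm_num
      _ ≤ √120 * (n : ℝ) ^ (-(1 : ℝ) / 8) := by
          gcongr
          rw [le_sqrt (by norm_num) (by norm_num)]
          norm_num
  have hlim : Tendsto (fun n : ℕ ↦ √120 * (n : ℝ) ^ (-(1 : ℝ) / 8)) atTop (nhds 0) := by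
    rw [neg_div, ← mul_zero √120]
    exact ((tendsto_rpow_neg_atTop (by norm_num)).comp tendsto_natCast_atTop_atTop).const_mul _
  exact ⟨hbound, squeeze_zero' (Eventually.of_forall fun n ↦ integral_nonneg fun ω ↦ by positivity)
    (eventually_atTop.mpr ⟨1, hbound⟩) hlim⟩

theorem poisson_counterexample_L52_convergence
    {Ω : Type*} [MeasurableSpace Ω] (P : Measure Ω) [IsProbabilityMeasure P]
    (Y : ℕ → Ω → ℕ) (l : ℕ → ℝ≥0)
    (hmeas : ∀ n, Measurable (Y n))
    (hindep : iIndepFun Y P)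
    (hpois : ∀ k, Measure.map (Y k) P = poissonMeasure (l k))
    (hl_even : ∀ n, 1 ≤ n → (l (2 * n) : ℝ) = (n : ℝ) ^ (-(3 : ℝ) / 4))
    (hl_odd : ∀ n, 1 ≤ n → (l (2 * n + 1) : ℝ) = (n : ℝ) ^ (-(5 : ℝ) / 16))
    (X : ℕ → Ω → ℝ)
    (hX : ∀ k ω, X k ω = ((Y k ω : ℝ) - l k) / Real.sqrt (l k))
    (F : ℕ → Ω → ℝ)
    (hF : ∀ n ω, F n ω = X (2 * n) ω * (Y (2 * n + 1) ω : ℝ)) :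
    (∀ n, 1 ≤ n → ∫ ω, |F n ω| ^ ((5 : ℝ) / 2) ∂P
        ≤ Real.sqrt 120 * (n : ℝ) ^ (-(1 : ℝ) / 8)) ∧
      Tendsto (fun n => ∫ ω, |F n ω| ^ ((5 : ℝ) / 2) ∂P) atTop (nhds 0) :=
  poisson_counterexample_L52_convergence_general P Y l hmeas hindep hpois hl_even hl_odd X hX F hF
end
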